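/- The function u₊: S^n → ℝ defined by u₊(x) = ∫_{x_{n+1}}^1 √((2−2s)/(1−s²)) ds is a backward weak KAM solution for the value c = 1 of the spherical pendulum: u₊ ≺ L+1, and for every x ∈ S^n there exists a C¹ curve γ_x: (−∞,0] → S^n with γ_x(0) = x and u₊(x) − u₊(γ_x(−t)) = ∫_{−t}^0 L(γ_x(s), γ̇_x(s)) ds + t for all t ≥ 0. -/

import Mathlib

open Set

noncomputable section

namespace SphericalPendulum

variable (n : ℕ)

/-- The ambient Euclidean space `ℝ^{n+1}`. -/
abbrev Amb := EuclideanSpace ℝ (Fin (n + 1))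

/-- The unit sphere `S^n ⊂ ℝ^{n+1}`. -/
abbrev Sph := Metric.sphere (0 : Amb n) 1

/-- The last coordinate `x_{n+1}` of a point of `ℝ^{n+1}`. -/
def lastCoord (x : Amb n) : ℝ := x (Fin.last n)

/-- The spherical-pendulum Lagrangian `L(x,v) = ½‖v‖² − x_{n+1}`. -/
def Lsph (x v : Amb n) : ℝ := ‖v‖ ^ 2 / 2 - lastCoord n x

/-- Velocity of a curve in the sphere, computed in the ambient space. -/
def sVel (γ : ℝ → Sph n) (s : ℝ) : Amb n := deriv (fun t : ℝ => (γ t : Amb n)) s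

/-- Piecewise `C¹` curve `γ : [a,b] → S^n`. -/
def sPiecewiseC1On (γ : ℝ → Sph n) (a b : ℝ) : Prop :=
  ContinuousOn (fun t : ℝ => (γ t : Amb n)) (Icc a b) ∧
    ∃ (k : ℕ) (t : Fin (k + 1) → ℝ), StrictMono t ∧ t 0 = a ∧ t (Fin.last k) = b ∧
      ∀ i : Fin k, ContDiffOn ℝ 1 (fun s : ℝ => (γ s : Amb n))
        (Icc (t i.castSucc) (t i.succ))

/-- The action `A_L(γ) = ∫_a^b L(γ(s), γ̇(s)) ds` of a curve `γ : [a,b] → S^n`. -/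
def sAction (γ : ℝ → Sph n) (a b : ℝ) : ℝ :=
  ∫ s in a..b, Lsph n (γ s : Amb n) (sVel n γ s)

/-- `u ≺ L + c` : `u` is dominated by `L + c`. -/
def sDominated (c : ℝ) (u : Sph n → ℝ) : Prop :=
  ∀ (γ : ℝ → Sph n) (a b : ℝ), a ≤ b → sPiecewiseC1On n γ a b →
    u (γ b) - u (γ a) ≤ sAction n γ a b + c * (b - a)

/-- The weak KAM solution `u₊(x) = ∫_{x_{n+1}}^1 √((2−2s)/(1−s²)) ds`. -/
def uPlus (x : Sph n) : ℝ :=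
  ∫ s in (lastCoord n (x : Amb n))..1, Real.sqrt ((2 - 2 * s) / (1 - s ^ 2))

/-- Backward weak KAM solution for the value `c`, for the spherical pendulum. -/
def sBackwardWeakKAM (c : ℝ) (u : Sph n → ℝ) : Prop :=
  sDominated n c u ∧
    ∀ x : Sph n, ∃ γ : ℝ → Sph n, γ 0 = x ∧
      ContDiffOn ℝ 1 (fun s : ℝ => (γ s : Amb n)) (Iic 0) ∧
      ∀ t : ℝ, 0 ≤ t → u x - u (γ (-t)) = sAction n γ (-t) 0 + c * t

/-- The north pole `N = (0,…,0,1) ∈ S^n`. -/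
def northPole : Sph n :=
  ⟨EuclideanSpace.single (Fin.last n) (1 : ℝ), by simp⟩

end SphericalPendulum

/-!
The integral defining `u₊` evaluates to `4 - 2 √(2 + 2 h)`, where `h = x_{n+1} = ⟪x, N⟫` is the
height of `x` above the centre and `N` the north pole.

Domination: along a curve with velocity `v ⊥ x`, Cauchy–Schwarz against the part of `N` orthogonal
to `x` gives `ḣ² ≤ ‖v‖² (1 - h²)`, and AM-GM then bounds `d/ds u₊ = -2 ḣ / √(2 + 2 h)` by
`½ ‖v‖² + 1 - h = L + 1`. As `u₊` is not differentiable at the south pole, this is run with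
`√(ε + 2 + 2 h)` in place of `√(2 + 2 h)`, and `ε → 0`.

Calibration: `x` lies on a great circle through `N`. Along it, at angle `2 φ` from `N` with
`φ' = sin φ` (explicitly `φ = 2 arctan (c eˢ)`), one has `L + 1 = 4 sin² φ = d/ds (-4 cos φ)` and
`u₊ = 4 - 4 cos φ`, so the domination inequality is an equality.
-/

open MeasureTheory intervalIntegral Real Filter Topology
open scoped RealInnerProductSpace

theorem integral_sqrt_two_sub_two_mul_div (r : ℝ) (hr₁ : -1 ≤ r) (hr₂ : r ≤ 1) :
    ∫ s in r..1, √((2 - 2 * s) / (1 - s ^ 2)) = 4 - 2 * √(2 + 2 * r) := by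
  have hcont : ContinuousOn (fun s => 2 * √(2 + 2 * s)) (Icc r 1) := by fun_prop
  have hderiv : ∀ s ∈ Ioo r 1,
      HasDerivAt (fun s => 2 * √(2 + 2 * s)) (√((2 - 2 * s) / (1 - s ^ 2))) s := by
    rintro s ⟨hrs, hs1⟩
    have hpos : 0 < 2 + 2 * s := by linarith
    have hlin : HasDerivAt (fun s => 2 + 2 * s) 2 s := by
      simpa using ((hasDerivAt_id s).const_mul 2).const_add 2
    refine ((hlin.sqrt hpos.ne').const_mul 2).congr_deriv ?_
    rw [show (2 - 2 * s) / (1 - s ^ 2) = 2 ^ 2 / (2 + 2 * s) by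
      rw [div_eq_div_iff (by nlinarith) hpos.ne']; ring, sqrt_div' _ hpos.le, sqrt_sq zero_le_two]
    field_simp
  have hint : IntervalIntegrable (fun s => √((2 - 2 * s) / (1 - s ^ 2))) volume r 1 :=
    (intervalIntegrable_iff_integrableOn_Ioc_of_le hr₂).2
      (integrableOn_deriv_of_nonneg hcont hderiv fun _ _ => sqrt_nonneg _)
  rw [integral_eq_sub_of_hasDerivAt_of_le hr₂ hcont hderiv hint]
  norm_num [show √4 = 2 by rw [show (4 : ℝ) = 2 ^ 2 by norm_num, sqrt_sq zero_le_two]]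

theorem hasDerivAt_two_mul_arctan_mul_exp (c s : ℝ) :
    HasDerivAt (fun s => 2 * arctan (c * exp s)) (sin (2 * arctan (c * exp s))) s := by
  have hw := ((hasDerivAt_exp s).const_mul c).arctan.const_mul 2
  refine hw.congr_deriv ?_
  rw [sin_two_mul, sin_arctan, cos_arctan]
  field_simp
  rw [sq_sqrt (by positivity)]

theorem sub_le_integral_of_partition {φ F : ℝ → ℝ} :
    ∀ {k : ℕ} (t : Fin (k + 1) → ℝ),
      (∀ i : Fin k, IntervalIntegrable φ volume (t i.castSucc) (t i.succ)) →
      (∀ i : Fin k, F (t i.succ) - F (t i.castSucc) ≤ ∫ s in t i.castSucc..t i.succ, φ s) →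
      IntervalIntegrable φ volume (t 0) (t (Fin.last k)) ∧
        F (t (Fin.last k)) - F (t 0) ≤ ∫ s in t 0..t (Fin.last k), φ s
  | 0, t, _, _ => by simp
  | k + 1, t, hint, hle => by
    obtain ⟨hint₀, hle₀⟩ := sub_le_integral_of_partition (fun i => t i.castSucc)
      (fun i => hint i.castSucc) (fun i => hle i.castSucc)
    have hint₁ := hint (Fin.last k)
    have hle₁ := hle (Fin.last k)
    simp only [Fin.castSucc_zero, Fin.succ_last] at hint₀ hle₀ hint₁ hle₁
    refine ⟨hint₀.trans hint₁, ?_⟩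
    rw [← integral_add_adjacent_intervals hint₀ hint₁]
    linarith

theorem ContDiffOn.intervalIntegrable_comp_deriv {F G : Type*} [NormedAddCommGroup F]
    [NormedSpace ℝ F] [NormedAddCommGroup G] {f : ℝ → F} {c d : ℝ} (hcd : c < d)
    (hf : ContDiffOn ℝ 1 f (Icc c d)) {Φ : F → F → G} (hΦ : Continuous (Function.uncurry Φ)) :
    IntervalIntegrable (fun s => Φ (f s) (deriv f s)) volume c d := by
  have hcont : ContinuousOn (fun s => Φ (f s) (derivWithin f (Icc c d) s)) (Icc c d) :=
    hΦ.comp_continuousOn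
      (hf.continuousOn.prodMk (hf.continuousOn_derivWithin (uniqueDiffOn_Icc hcd) le_rfl))
  rw [intervalIntegrable_iff_integrableOn_Ioo_of_le hcd.le]
  refine (hcont.integrableOn_Icc.mono_set Ioo_subset_Icc_self).congr_fun (fun s hs => ?_)
    measurableSet_Ioo
  simp only [derivWithin_of_mem_nhds (Icc_mem_nhds hs.1 hs.2)]

section InnerProductSpace

variable {E : Type*} [NormedAddCommGroup E] [InnerProductSpace ℝ E]

theorem inner_eq_zero_of_hasDerivAt_of_norm_eq_one {f : ℝ → E} {v : E} {s : ℝ}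
    (hf : ∀ t, ‖f t‖ = 1) (hv : HasDerivAt f v s) : ⟪f s, v⟫ = 0 := by
  have hconst : HasDerivAt (fun t => ‖f t‖ ^ 2) 0 s := by
    simpa only [hf, one_pow] using hasDerivAt_const s (1 : ℝ)
  have := hv.norm_sq.unique hconst
  linarith

theorem sq_inner_le_of_inner_eq_zero {N x v : E} (hN : ‖N‖ = 1) (hx : ‖x‖ = 1)
    (hxv : ⟪x, v⟫ = 0) : ⟪v, N⟫ ^ 2 ≤ ‖v‖ ^ 2 * (1 - ⟪x, N⟫ ^ 2) := by
  set h := ⟪x, N⟫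
  have hproj : ⟪v, N⟫ = ⟪v, N - h • x⟫ := by
    rw [inner_sub_right, real_inner_smul_right, real_inner_comm x v, hxv, mul_zero, sub_zero]
  have hnorm : ‖N - h • x‖ ^ 2 = 1 - h ^ 2 := by
    rw [norm_sub_sq_real, real_inner_smul_right, real_inner_comm, norm_smul, hN, hx,
      Real.norm_eq_abs]
    simp only [mul_one, sq_abs, one_pow]
    ring
  rw [hproj, ← hnorm, ← mul_pow, ← sq_abs]
  gcongr
  exact abs_real_inner_le_norm _ _

theorem neg_two_mul_inner_div_sqrt_le {N x v : E} (hN : ‖N‖ = 1) (hx : ‖x‖ = 1)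
    (hxv : ⟪x, v⟫ = 0) {ε : ℝ} (hε : 0 ≤ ε) :
    -2 * ⟪v, N⟫ / √(ε + 2 + 2 * ⟪x, N⟫) ≤ ‖v‖ ^ 2 / 2 + 1 - ⟪x, N⟫ := by
  set h := ⟪x, N⟫
  have hh : |h| ≤ 1 := by simpa [hx, hN] using abs_real_inner_le_norm x N
  obtain ⟨hh₁, hh₂⟩ := abs_le.mp hh
  set A := ‖v‖ ^ 2 / 2 + 1 - h with hA_def
  have hA : 0 ≤ A := by nlinarith [sq_nonneg ‖v‖]
  have hD : 2 * (1 + h) ≤ √(ε + 2 + 2 * h) ^ 2 := by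
    rw [sq_sqrt (by linarith)]
    linarith
  have hAMGM : 2 * ‖v‖ ^ 2 * (1 - h) ≤ A ^ 2 := by
    rw [hA_def]; nlinarith [sq_nonneg (‖v‖ ^ 2 / 2 - (1 - h))]
  have hsq : (-2 * ⟪v, N⟫) ^ 2 ≤ (A * √(ε + 2 + 2 * h)) ^ 2 :=
    calc (-2 * ⟪v, N⟫) ^ 2 ≤ 4 * (‖v‖ ^ 2 * (1 - h ^ 2)) := by
          nlinarith [sq_inner_le_of_inner_eq_zero hN hx hxv]
      _ = (2 * ‖v‖ ^ 2 * (1 - h)) * (2 * (1 + h)) := by ring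
      _ ≤ A ^ 2 * √(ε + 2 + 2 * h) ^ 2 := by gcongr; nlinarith
      _ = (A * √(ε + 2 + 2 * h)) ^ 2 := by ring
  exact div_le_of_le_mul₀ (sqrt_nonneg _) hA
    (abs_le_of_sq_le_sq' hsq (mul_nonneg hA (sqrt_nonneg _))).2

theorem sqrt_sub_sqrt_le_integral_lagrangian {N : E} (hN : ‖N‖ = 1) {ε : ℝ} (hε : 0 < ε)
    {f : ℝ → E} (hf₁ : ∀ t, ‖f t‖ = 1) {c d : ℝ} (hcd : c < d) (hf : ContDiffOn ℝ 1 f (Icc c d)) :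
    2 * √(ε + 2 + 2 * ⟪f c, N⟫) - 2 * √(ε + 2 + 2 * ⟪f d, N⟫)
      ≤ ∫ s in c..d, (‖deriv f s‖ ^ 2 / 2 + 1 - ⟪f s, N⟫) := by
  have hpos : ∀ t, 0 < ε + 2 + 2 * ⟪f t, N⟫ := fun t => by
    have := neg_le_of_abs_le (by simpa [hf₁, hN] using abs_real_inner_le_norm (f t) N)
    linarith
  have hv : ∀ s ∈ Ioo c d, HasDerivAt f (deriv f s) s := fun s hs =>
    ((hf.contDiffAt (Icc_mem_nhds hs.1 hs.2)).differentiableAt one_ne_zero).hasDerivAt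
  have hderiv : ∀ s ∈ Ioo c d, HasDerivAt (fun t => -2 * √(ε + 2 + 2 * ⟪f t, N⟫))
      (-2 * ⟪deriv f s, N⟫ / √(ε + 2 + 2 * ⟪f s, N⟫)) s := fun s hs => by
    have hinner : HasDerivAt (fun t => ⟪f t, N⟫) ⟪deriv f s, N⟫ s := by
      simpa using (hv s hs).inner ℝ (hasDerivAt_const s N)
    refine ((((hinner.const_mul 2).const_add (ε + 2)).sqrt (hpos s).ne').const_mul (-2)).congr_deriv
      ?_
    field_simp
  have hint : IntegrableOn (fun s => ‖deriv f s‖ ^ 2 / 2 + 1 - ⟪f s, N⟫) (Icc c d) := by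
    rw [← intervalIntegrable_iff_integrableOn_Icc_of_le hcd.le]
    exact ContDiffOn.intervalIntegrable_comp_deriv hcd hf
      (Φ := fun x v => ‖v‖ ^ 2 / 2 + 1 - ⟪x, N⟫) (by fun_prop)
  have key := sub_le_integral_of_hasDeriv_right_of_le hcd.le
    (by have := hf.continuousOn; fun_prop) (fun s hs => (hderiv s hs).hasDerivWithinAt) hint
    (fun s hs => neg_two_mul_inner_div_sqrt_le hN (hf₁ s)
      (inner_eq_zero_of_hasDerivAt_of_norm_eq_one hf₁ (hv s hs)) hε.le)
  linarith

def greatCircle (N e : E) (θ : ℝ) : E := cos θ • N + sin θ • e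

variable {N e : E}

theorem hasDerivAt_greatCircle (θ : ℝ) :
    HasDerivAt (greatCircle N e) (greatCircle N e (θ + π / 2)) θ := by
  simp only [greatCircle, cos_add_pi_div_two, sin_add_pi_div_two, neg_smul, neg_add_eq_sub]
  exact ((hasDerivAt_cos θ).smul_const N).add ((hasDerivAt_sin θ).smul_const e) |>.congr_deriv
    (by rw [neg_smul]; abel)

theorem norm_greatCircle (hN : ‖N‖ = 1) (he : ‖e‖ = 1) (hNe : ⟪N, e⟫ = 0) (θ : ℝ) :
    ‖greatCircle N e θ‖ = 1 := by
  refine (pow_eq_one_iff_of_nonneg (norm_nonneg _) two_ne_zero).1 ?_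
  rw [greatCircle, norm_add_sq_real, real_inner_smul_left, real_inner_smul_right, hNe,
    norm_smul, norm_smul, hN, he, Real.norm_eq_abs, Real.norm_eq_abs]
  simp only [mul_zero, mul_one, sq_abs]
  linarith [sin_sq_add_cos_sq θ]

theorem inner_greatCircle_left (hN : ‖N‖ = 1) (hNe : ⟪N, e⟫ = 0) (θ : ℝ) :
    ⟪greatCircle N e θ, N⟫ = cos θ := by
  rw [greatCircle, inner_add_left, real_inner_smul_left, real_inner_smul_left,
    real_inner_self_eq_norm_sq, hN, real_inner_comm, hNe]
  ring

theorem integral_lagrangian_greatCircle (hN : ‖N‖ = 1) (he : ‖e‖ = 1) (hNe : ⟪N, e⟫ = 0)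
    {φ : ℝ → ℝ} (hφ : ∀ s, HasDerivAt φ (sin (φ s)) s) (a b : ℝ) :
    ∫ s in a..b, (‖deriv (fun s => greatCircle N e (2 * φ s)) s‖ ^ 2 / 2 + 1
        - ⟪greatCircle N e (2 * φ s), N⟫) = 4 * cos (φ a) - 4 * cos (φ b) := by
  have hintegrand : ∀ s, ‖deriv (fun s => greatCircle N e (2 * φ s)) s‖ ^ 2 / 2 + 1
      - ⟪greatCircle N e (2 * φ s), N⟫ = 4 * sin (φ s) * sin (φ s) := fun s => by
    have hγ : HasDerivAt (fun s => greatCircle N e (2 * φ s))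
        ((2 * sin (φ s)) • greatCircle N e (2 * φ s + π / 2)) s :=
      (hasDerivAt_greatCircle _).scomp s ((hφ s).const_mul 2)
    rw [hγ.deriv, norm_smul, norm_greatCircle hN he hNe, inner_greatCircle_left hN hNe,
      cos_two_mul, Real.norm_eq_abs]
    nlinarith [sq_abs (2 * sin (φ s)), sin_sq_add_cos_sq (φ s)]
  have hφc : Continuous φ := continuous_iff_continuousAt.2 fun s => (hφ s).continuousAt
  simp only [hintegrand]
  rw [integral_eq_sub_of_hasDerivAt (f := fun s => -4 * cos (φ s))
    (fun s _ => ((hφ s).cos.const_mul (-4)).congr_deriv (by ring))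
    (by apply Continuous.intervalIntegrable; fun_prop)]
  ring

theorem exists_greatCircle_arccos_eq (hN : ‖N‖ = 1) {x : E} (hx : ‖x‖ = 1)
    (h₀ : ∃ e₀ : E, ‖e₀‖ = 1 ∧ ⟪N, e₀⟫ = 0) :
    ∃ e : E, ‖e‖ = 1 ∧ ⟪N, e⟫ = 0 ∧ greatCircle N e (arccos ⟪x, N⟫) = x := by
  obtain ⟨hh₁, hh₂⟩ := abs_le.mp (by simpa [hx, hN] using abs_real_inner_le_norm x N)
  set h := ⟪x, N⟫ with hh
  set w := x - h • N with hw_def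
  have hwN : ⟪N, w⟫ = 0 := by
    rw [inner_sub_right, real_inner_smul_right, real_inner_self_eq_norm_sq, hN, real_inner_comm]
    ring
  have hw : ‖w‖ = √(1 - h ^ 2) := by
    rw [← sqrt_sq (norm_nonneg w), norm_sub_sq_real, real_inner_smul_right, ← hh, norm_smul,
      hN, hx, Real.norm_eq_abs, mul_one, sq_abs]
    ring_nf
  suffices ∃ e : E, ‖e‖ = 1 ∧ ⟪N, e⟫ = 0 ∧ ‖w‖ • e = w by
    obtain ⟨e, he, hNe, hwe⟩ := this
    refine ⟨e, he, hNe, ?_⟩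
    rw [greatCircle, cos_arccos hh₁ hh₂, sin_arccos, ← hw, hwe, hw_def, add_sub_cancel]
  by_cases hw0 : w = 0
  · obtain ⟨e₀, he₀, hNe₀⟩ := h₀
    exact ⟨e₀, he₀, hNe₀, by simp [hw0]⟩
  · refine ⟨‖w‖⁻¹ • w, ?_, by rw [real_inner_smul_right, hwN, mul_zero], ?_⟩
    · rw [norm_smul, norm_inv, norm_norm, inv_mul_cancel₀ (norm_ne_zero_iff.2 hw0)]
    · rw [smul_smul, mul_inv_cancel₀ (norm_ne_zero_iff.2 hw0), one_smul]

end InnerProductSpace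

namespace SphericalPendulum

section

variable {n : ℕ}

theorem norm_coe_sph (x : Sph n) : ‖(x : Amb n)‖ = 1 := norm_eq_of_mem_sphere x

theorem lastCoord_eq_inner (x : Amb n) : lastCoord n x = ⟪x, (northPole n : Amb n)⟫ := by
  simp [lastCoord, northPole, EuclideanSpace.inner_single_right]

theorem uPlus_eq (x : Sph n) :
    uPlus n x = 4 - 2 * √(2 + 2 * ⟪(x : Amb n), (northPole n : Amb n)⟫) := by
  obtain ⟨h₁, h₂⟩ := abs_le.mp
    (by simpa using abs_real_inner_le_norm (x : Amb n) (northPole n : Amb n))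
  rw [uPlus, lastCoord_eq_inner]
  exact integral_sqrt_two_sub_two_mul_div _ h₁ h₂

theorem sAction_add_eq_integral (γ : ℝ → Sph n) {a b : ℝ}
    (hint : IntervalIntegrable (fun s => ‖sVel n γ s‖ ^ 2 / 2 + 1
      - ⟪(γ s : Amb n), (northPole n : Amb n)⟫) volume a b) :
    sAction n γ a b + 1 * (b - a) = ∫ s in a..b, (‖sVel n γ s‖ ^ 2 / 2 + 1
      - ⟪(γ s : Amb n), (northPole n : Amb n)⟫) := by
  have hL : (fun s => Lsph n (γ s : Amb n) (sVel n γ s)) = fun s =>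
      (‖sVel n γ s‖ ^ 2 / 2 + 1 - ⟪(γ s : Amb n), (northPole n : Amb n)⟫) - 1 := by
    ext s
    rw [Lsph, lastCoord_eq_inner]
    ring
  rw [sAction, hL, integral_sub hint intervalIntegrable_const, intervalIntegral.integral_const,
    smul_eq_mul]
  ring

theorem uPlus_dominated : sDominated n 1 (uPlus n) := by
  rintro γ a b - ⟨-, k, t, ht, rfl, rfl, hC⟩
  set N := (northPole n : Amb n)
  have hN : ‖N‖ = 1 := norm_coe_sph _
  have hγ₁ : ∀ s, ‖(γ s : Amb n)‖ = 1 := fun s => norm_coe_sph (γ s)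
  have hlt (i : Fin k) : t i.castSucc < t i.succ := ht Fin.castSucc_lt_succ
  have hpieces (ε : ℝ) (hε : 0 < ε) := sub_le_integral_of_partition
    (φ := fun s => ‖sVel n γ s‖ ^ 2 / 2 + 1 - ⟪(γ s : Amb n), N⟫)
    (F := fun s => -2 * √(ε + 2 + 2 * ⟪(γ s : Amb n), N⟫)) t
    (fun i => ContDiffOn.intervalIntegrable_comp_deriv (hlt i) (hC i)
      (Φ := fun x v => ‖v‖ ^ 2 / 2 + 1 - ⟪x, N⟫) (by fun_prop))
    (fun i => by
      have := sqrt_sub_sqrt_le_integral_lagrangian hN hε hγ₁ (hlt i) (hC i)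
      simp only [sVel]
      linarith)
  rw [sAction_add_eq_integral γ (hpieces 1 one_pos).1, uPlus_eq, uPlus_eq]
  have hlim : Tendsto (fun ε => -2 * √(ε + 2 + 2 * ⟪(γ (t (Fin.last k)) : Amb n), N⟫)
      - -2 * √(ε + 2 + 2 * ⟪(γ (t 0) : Amb n), N⟫)) (𝓝[>] 0)
      (𝓝 (-2 * √(0 + 2 + 2 * ⟪(γ (t (Fin.last k)) : Amb n), N⟫)
      - -2 * √(0 + 2 + 2 * ⟪(γ (t 0) : Amb n), N⟫))) :=
    ((Continuous.tendsto (by fun_prop) 0).mono_left nhdsWithin_le_nhds)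
  have := le_of_tendsto hlim (eventually_nhdsWithin_of_forall fun ε hε => (hpieces ε hε).2)
  simp only [zero_add] at this
  linarith

theorem uPlus_calibrated (hn : 1 ≤ n) (x : Sph n) :
    ∃ γ : ℝ → Sph n, γ 0 = x ∧ ContDiffOn ℝ 1 (fun s : ℝ => (γ s : Amb n)) (Iic 0) ∧
      ∀ t : ℝ, 0 ≤ t → uPlus n x - uPlus n (γ (-t)) = sAction n γ (-t) 0 + 1 * t := by
  set N := (northPole n : Amb n)
  have hN : ‖N‖ = 1 := norm_coe_sph _
  have h₀ : ∃ e₀ : Amb n, ‖e₀‖ = 1 ∧ ⟪N, e₀⟫ = 0 := by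
    refine ⟨EuclideanSpace.single ⟨0, by omega⟩ 1, by simp, ?_⟩
    simp [N, northPole, EuclideanSpace.inner_single_left, Fin.ext_iff]
    omega
  obtain ⟨e, he, hNe, hx⟩ := exists_greatCircle_arccos_eq hN (norm_coe_sph x) h₀
  set θ₀ := arccos ⟪(x : Amb n), N⟫
  set c := tan (θ₀ / 4)
  have hc : arctan c = θ₀ / 4 :=
    arctan_tan (by linarith [arccos_nonneg ⟪(x : Amb n), N⟫, pi_pos])
      (by linarith [arccos_le_pi ⟪(x : Amb n), N⟫, pi_pos])
  set φ : ℝ → ℝ := fun s => 2 * arctan (c * exp s)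
  set f : ℝ → Amb n := fun s => greatCircle N e (2 * φ s)
  have hφ : ContDiff ℝ 1 φ := contDiff_const.mul (contDiff_arctan.comp (by fun_prop))
  have hf : ContDiff ℝ 1 f := by
    simp only [f, greatCircle]
    fun_prop
  let γ : ℝ → Sph n := fun s => ⟨f s, by simp [f, norm_greatCircle hN he hNe]⟩
  have hγ₀ : γ 0 = x := by
    ext1
    simp only [γ, f, φ, exp_zero, mul_one, hc, ← hx]
    ring_nf
  refine ⟨γ, hγ₀, hf.contDiffOn, fun t ht => ?_⟩
  have hcos : ∀ s ≤ 0, 0 ≤ cos (φ s) := fun s hs => by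
    have hc₀ : 0 ≤ c := arctan_nonneg.mp (hc ▸ by linarith [arccos_nonneg ⟪(x : Amb n), N⟫])
    have h₁ : 0 ≤ arctan (c * exp s) := arctan_nonneg.mpr (by positivity)
    have h₂ : arctan (c * exp s) ≤ arctan c :=
      arctan_le_arctan_iff.mpr (mul_le_of_le_one_right hc₀ (exp_le_one_iff.mpr hs))
    apply cos_nonneg_of_mem_Icc
    constructor <;> simp only [φ] <;> linarith [arccos_le_pi ⟪(x : Amb n), N⟫, pi_pos]
  have hsqrt : ∀ s ≤ 0, 2 * √(2 + 2 * ⟪(γ s : Amb n), N⟫) = 4 * cos (φ s) := fun s hs => by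
    simp only [γ, f, inner_greatCircle_left hN hNe, cos_two_mul]
    rw [show 2 + 2 * (2 * cos (φ s) ^ 2 - 1) = (2 * cos (φ s)) ^ 2 by ring,
      sqrt_sq (by linarith [hcos s hs])]
    ring
  have hint : IntervalIntegrable (fun s => ‖sVel n γ s‖ ^ 2 / 2 + 1
      - ⟪(γ s : Amb n), N⟫) volume (-t) 0 := by
    have := hf.continuous_deriv le_rfl
    exact Continuous.intervalIntegrable (by simp only [sVel, γ]; fun_prop) _ _
  have hact : sAction n γ (-t) 0 + 1 * (0 - -t) = 4 * cos (φ (-t)) - 4 * cos (φ 0) :=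
    (sAction_add_eq_integral γ hint).trans (integral_lagrangian_greatCircle hN he hNe
      (fun s => hasDerivAt_two_mul_arctan_mul_exp c s) (-t) 0)
  rw [← hγ₀, uPlus_eq, uPlus_eq, hsqrt 0 le_rfl, hsqrt (-t) (by linarith)]
  linarith

end

variable (n : ℕ)

/-- The function `u₊(x) = ∫_{x_{n+1}}^1 √((2−2s)/(1−s²)) ds` is a
backward weak KAM solution of the spherical pendulum for the value `c = 1`: it is
dominated by `L + 1` and every point is the endpoint of a `C¹` calibrating curve
`γ_x : (−∞,0] → S^n`. -/
theorem uPlus_is_backward_weakKAM (hn : 1 ≤ n) :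
    sBackwardWeakKAM n 1 (uPlus n) :=
  ⟨uPlus_dominated, uPlus_calibrated hn⟩

end SphericalPendulum
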